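/- arXiv:2312.14555 — 4 statements merged into one kernel-verified Lean document; each statement's English description precedes it below -/
import Mathlib

section
/- Let e ≥ 1 and r ≥ 0 be integers with r ≤ e − 1. Let a, b be integers with a ≥ 1 and b ≥ a·e, and let m_1, …, m_r, m_x be integers with 0 ≤ m_i ≤ a for all i and 0 ≤ m_x ≤ a. Then −a·e + 2a + 2b − a²·e + 2ab > (Σ_{i=1}^r m_i²) + m_x² + (Σ_{i=1}^r m_i) + m_x. In particular, neither −a·e + 2a + 2b − a²·e + 2ab + 2 = (Σ_{i=1}^r m_i²) + m_x² + (Σ_{i=1}^r m_i) + m_x nor −a·e + 2a + 2b − a²·e + 2ab = (Σ_{i=1}^r m_i²) + m_x² + (Σ_{i=1}^r m_i) + m_x can hold. -/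
theorem stmt_0 (e : ℤ) (he : 1 ≤ e) (r : ℕ) (hr : (r : ℤ) ≤ e - 1)
    (a b : ℤ) (ha : 1 ≤ a) (hb : a * e ≤ b)
    (m : Fin r → ℤ) (mx : ℤ)
    (hm : ∀ i, 0 ≤ m i ∧ m i ≤ a) (hmx : 0 ≤ mx ∧ mx ≤ a) :
    (-(a * e) + 2 * a + 2 * b - a ^ 2 * e + 2 * a * b
      > (∑ i, (m i) ^ 2) + mx ^ 2 + (∑ i, m i) + mx)
    ∧ ¬(-(a * e) + 2 * a + 2 * b - a ^ 2 * e + 2 * a * b + 2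
      = (∑ i, (m i) ^ 2) + mx ^ 2 + (∑ i, m i) + mx)
    ∧ ¬(-(a * e) + 2 * a + 2 * b - a ^ 2 * e + 2 * a * b
      = (∑ i, (m i) ^ 2) + mx ^ 2 + (∑ i, m i) + mx) := by
  have hsum : (∑ i, (m i) ^ 2) + (∑ i, m i) ≤ (r : ℤ) * (a ^ 2 + a) := by
    rw [← Finset.sum_add_distrib]
    calc (∑ i, ((m i) ^ 2 + m i)) ≤ ∑ _i : Fin r, (a ^ 2 + a) := by
          apply Finset.sum_le_sum
          intro i _
          obtain ⟨h0, h1⟩ := hm i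
          nlinarith
      _ = (r : ℤ) * (a ^ 2 + a) := by simp
  have hmx2 : mx ^ 2 + mx ≤ a ^ 2 + a := by
    obtain ⟨h0, h1⟩ := hmx
    nlinarith
  have key : -(a * e) + 2 * a + 2 * b - a ^ 2 * e + 2 * a * b
      > (∑ i, (m i) ^ 2) + mx ^ 2 + (∑ i, m i) + mx := by
    nlinarith [mul_le_mul_of_nonneg_left hb (by linarith : (0:ℤ) ≤ a),
      mul_le_mul_of_nonneg_right hr (by nlinarith : (0:ℤ) ≤ a ^ 2 + a)]
  exact ⟨key, by omega, by omega⟩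
end

section
/- Let e ≥ 1 and r ≥ 0 be integers with r ≤ e − 1. Let a, b, m_1, …, m_r, m_x be non-negative integers satisfying: (i) if a = 0 then b ≤ 1; (ii) if b = 0 then a ≤ 1; (iii) if a ≥ 1 and b ≥ 1 then b ≥ a·e; (iv) if a ≥ 1 then m_i ≤ a for all i and m_x ≤ a. If −a·e + 2a + 2b − a²·e + 2ab + 2 = (Σ_{i=1}^r m_i²) + m_x² + (Σ_{i=1}^r m_i) + m_x, then (a, b) = (0, 1), (a, b) = (1, 0), or (a, b) = (0, 0). -/
theorem stmt_1 (e : ℤ) (he : 1 ≤ e) (r : ℕ) (hr : (r : ℤ) ≤ e - 1)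
    (a b : ℤ) (ha : 0 ≤ a) (hb : 0 ≤ b)
    (m : Fin r → ℤ) (mx : ℤ)
    (hm0 : ∀ i, 0 ≤ m i) (hmx0 : 0 ≤ mx)
    (h1 : a = 0 → b ≤ 1)
    (h2 : b = 0 → a ≤ 1)
    (h3 : 1 ≤ a → 1 ≤ b → a * e ≤ b)
    (h4 : 1 ≤ a → (∀ i, m i ≤ a) ∧ mx ≤ a)
    (heq : -(a * e) + 2 * a + 2 * b - a ^ 2 * e + 2 * a * b + 2
      = (∑ i, (m i) ^ 2) + mx ^ 2 + (∑ i, m i) + mx) :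
    (a = 0 ∧ b = 1) ∨ (a = 1 ∧ b = 0) ∨ (a = 0 ∧ b = 0) := by
  rcases eq_or_lt_of_le ha with h0 | hapos
  · have := h1 h0.symm
    omega
  · have ha1 : 1 ≤ a := hapos
    rcases eq_or_lt_of_le hb with b0 | hbpos
    · have := h2 b0.symm
      omega
    · exfalso
      have hb1 : 1 ≤ b := hbpos
      have hae := h3 ha1 hb1
      obtain ⟨hma, hmxa⟩ := h4 ha1
      have hsum : (∑ i, ((m i) ^ 2 + m i)) ≤ (r : ℤ) * (a ^ 2 + a) := by
        calc (∑ i : Fin r, ((m i) ^ 2 + m i)) ≤ ∑ _i : Fin r, (a ^ 2 + a) := by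
              apply Finset.sum_le_sum
              intro i _
              nlinarith [hm0 i, hma i]
          _ = (r : ℤ) * (a ^ 2 + a) := by
              simp [Finset.sum_const]
      have hsplit : (∑ i, ((m i) ^ 2 + m i)) = (∑ i, (m i) ^ 2) + (∑ i, m i) :=
        Finset.sum_add_distrib
      have hmxb : mx ^ 2 + mx ≤ a ^ 2 + a := by nlinarith
      nlinarith [hsum, hsplit, heq, hae, hr, ha1, hb1, he]
end

section
/- Let e ≥ 1 and r ≥ 0 be integers with r ≤ e − 1. Let a, b, m_1, …, m_r, m_x be non-negative integers satisfying: (i) if a = 0 then b ≤ 1; (ii) if b = 0 then a ≤ 1; (iii) if a ≥ 1 and b ≥ 1 then b ≥ a·e; (iv) if a ≥ 1 then m_i ≤ a for all i and m_x ≤ a. If −a·e + 2a + 2b − a²·e + 2ab = (Σ_{i=1}^r m_i²) + m_x² + (Σ_{i=1}^r m_i) + m_x, then (a, b) = (0, 1), (a, b) = (1, 0), or (a, b) = (0, 0). -/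
theorem stmt_2 (e : ℤ) (he : 1 ≤ e) (r : ℕ) (hr : (r : ℤ) ≤ e - 1)
    (a b : ℤ) (ha : 0 ≤ a) (hb : 0 ≤ b)
    (m : Fin r → ℤ) (mx : ℤ)
    (hm0 : ∀ i, 0 ≤ m i) (hmx0 : 0 ≤ mx)
    (h1 : a = 0 → b ≤ 1)
    (h2 : b = 0 → a ≤ 1)
    (h3 : 1 ≤ a → 1 ≤ b → a * e ≤ b)
    (h4 : 1 ≤ a → (∀ i, m i ≤ a) ∧ mx ≤ a)
    (heq : -(a * e) + 2 * a + 2 * b - a ^ 2 * e + 2 * a * b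
      = (∑ i, (m i) ^ 2) + mx ^ 2 + (∑ i, m i) + mx) :
    (a = 0 ∧ b = 1) ∨ (a = 1 ∧ b = 0) ∨ (a = 0 ∧ b = 0) := by
  have hS1 : 0 ≤ ∑ i, (m i) ^ 2 := Finset.sum_nonneg fun i _ => sq_nonneg _
  have hS2 : 0 ≤ ∑ i, m i := Finset.sum_nonneg fun i _ => hm0 i
  by_cases ha0 : a = 0
  · have hb1 := h1 ha0
    interval_cases b
    · right; right; exact ⟨ha0, rfl⟩
    · left; exact ⟨ha0, rfl⟩
  · have ha1 : 1 ≤ a := by omega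
    obtain ⟨hma, hmxa⟩ := h4 ha1
    by_cases hb0 : b = 0
    · right; left; exact ⟨le_antisymm (h2 hb0) ha1, hb0⟩
    · exfalso
      have hb1 : 1 ≤ b := by omega
      have hab := h3 ha1 hb1
      have hsum : ∑ i, ((m i) ^ 2 + m i) ≤ r • (a ^ 2 + a) := by
        have := Finset.sum_le_card_nsmul Finset.univ (fun i => (m i) ^ 2 + m i)
          (a ^ 2 + a) (fun i _ => by show m i ^ 2 + m i ≤ a ^ 2 + a; nlinarith [mul_nonneg (sub_nonneg.2 (hma i)) (by linarith [hm0 i] : (0:ℤ) ≤ a + m i + 1)])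
        simpa using this
      have hsum' : ∑ i, ((m i) ^ 2 + m i) = (∑ i, (m i) ^ 2) + ∑ i, m i :=
        Finset.sum_add_distrib
      have hr' : (r : ℤ) • (a ^ 2 + a) ≤ (e - 1) * (a ^ 2 + a) := by
        have : (0:ℤ) ≤ a ^ 2 + a := by positivity
        simpa using mul_le_mul_of_nonneg_right hr this
      rw [hsum', ← Nat.cast_smul_eq_nsmul ℤ] at hsum
      nlinarith [mul_le_mul_of_nonneg_left hab ha, mul_le_mul_of_nonneg_left hab (le_of_lt (show (0:ℤ)<a by omega))]
end

section
/- Let e ≥ 0 and 1 ≤ r ≤ e + 2 be integers. Let a ≥ 1 and b ≥ 0 be integers and n_1, …, n_r integers with 0 ≤ n_i ≤ a for all i, satisfying: (i) if b = 0 then a = 1; (ii) if b ≥ 1 then b ≥ a·e; (iii) if a ≥ 2 or b ≥ e + 1, then for every subset S of {1, …, r} of cardinality at most e + 1 one has b ≥ Σ_{j∈S} n_j; (iv) for every index j with n_j > 0 one has 2ab − a²·e ≥ (Σ_{i=1}^r n_i²) − n_j; (v) if a = 1 and b = e then Σ_{i=1}^r n_i² ≤ e + 1; (vi) (−a²·e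 + 2ab − Σ_{i=1}^r n_i²) + (a·e − 2a − 2b + Σ_{i=1}^r n_i) ≥ −2. If −a²·e + 2ab − Σ_{i=1}^r n_i² < 0, then either (−a²·e + 2ab − Σ_{i=1}^r n_i² = −1 and a·e − 2a − 2b + Σ_{i=1}^r n_i = −1), or (a = 1 and b = 0). -/
theorem stmt_12 (e : ℤ) (he : 0 ≤ e) (r : ℕ) (hr1 : 1 ≤ r) (hr2 : (r : ℤ) ≤ e + 2)
    (a b : ℤ) (ha : 1 ≤ a) (hb : 0 ≤ b)
    (n : Fin r → ℤ) (hn : ∀ i, 0 ≤ n i ∧ n i ≤ a)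
    (h1 : b = 0 → a = 1)
    (h2 : 1 ≤ b → a * e ≤ b)
    (h3 : (2 ≤ a ∨ e + 1 ≤ b) → ∀ S : Finset (Fin r),
      (S.card : ℤ) ≤ e + 1 → (∑ j ∈ S, n j) ≤ b)
    (h4 : ∀ j : Fin r, 0 < n j →
      (∑ i, (n i) ^ 2) - n j ≤ 2 * a * b - a ^ 2 * e)
    (h5 : a = 1 → b = e → (∑ i, (n i) ^ 2) ≤ e + 1)
    (h6 : (-(a ^ 2 * e) + 2 * a * b - (∑ i, (n i) ^ 2))
      + (a * e - 2 * a - 2 * b + (∑ i, n i)) ≥ -2)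
    (hneg : -(a ^ 2 * e) + 2 * a * b - (∑ i, (n i) ^ 2) < 0) :
    (-(a ^ 2 * e) + 2 * a * b - (∑ i, (n i) ^ 2) = -1
      ∧ a * e - 2 * a - 2 * b + (∑ i, n i) = -1)
    ∨ (a = 1 ∧ b = 0) := by
  by_cases hb0 : b = 0
  · exact Or.inr ⟨h1 hb0, hb0⟩
  · have hb1 : 1 ≤ b := lt_of_le_of_ne hb (Ne.symm hb0)
    have hae : a * e ≤ b := h2 hb1
    have hsum : (∑ i, n i) ≤ 2 * a + 2 * b - a * e - 1 := by
      by_cases hcase : 2 ≤ a ∨ e + 1 ≤ b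
      · have hS := h3 hcase
        have hba : (∑ i, n i) ≤ b + a := by
          by_cases hre : (r : ℤ) ≤ e + 1
          · have h := hS Finset.univ (by simpa using hre)
            linarith
          · push_neg at hre
            set j : Fin r := ⟨0, hr1⟩ with hj
            have hcard : ((Finset.univ.erase j).card : ℤ) ≤ e + 1 := by
              rw [Finset.card_erase_of_mem (Finset.mem_univ j)]
              have : (Finset.univ : Finset (Fin r)).card = r := by simp
              rw [this]
              push_cast [Nat.cast_sub hr1]
              omega
            have hs1 := hS _ hcard
            have hs2 : (∑ i ∈ Finset.univ.erase j, n i) + n j = ∑ i, n i :=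
              Finset.sum_erase_add _ _ (Finset.mem_univ j)
            linarith [(hn j).2]
        linarith
      · push_neg at hcase
        obtain ⟨hc1, hc2⟩ := hcase
        have ha1 : a = 1 := by omega
        rw [ha1, one_mul] at hae
        have hbe : b = e := by omega
        have h5' := h5 ha1 hbe
        have hsq : (∑ i, (n i) ^ 2) = ∑ i, n i := by
          apply Finset.sum_congr rfl
          intro i _
          have h := hn i
          rw [ha1] at h
          have : n i = 0 ∨ n i = 1 := by omega
          rcases this with h' | h' <;> simp [h']
        rw [hsq] at h5'
        rw [ha1, hbe]
        linarith
    left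
    constructor <;> linarith
end
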